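/- Let R ⊆ ℝ^n be a rational polyhedron and S = R ∩ ℤ^n nonempty, so that conv(S) ∩ ℤ^n = S and conv(S) = 𝒫 + ℛ + ℒ, where ℒ is the lineality space of conv(S), 𝒫 + ℛ = conv(S) ∩ ℒ^⊥ is a pointed polyhedron with recession cone ℛ, and 𝒫 is a polytope. Let S_0 := (𝒫 + lin(ℛ) + ℒ) ∩ ℤ^n, where lin(ℛ) = ℛ + (−ℛ) is the linear hull of ℛ. If P ⊆ conv(S) is a nonempty rational polyhedron, then P_S = P_{S_0} ∩ P_{S,Π}, where Π := {(α,β) ∈ Π_P : αℓ = 0 for all ℓ ∈ ℒ}. -/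

import Mathlib

open scoped Classical Pointwise

/-- Coercion of an integer vector to a real vector. -/
def coeZR {n : ℕ} (z : Fin n → ℤ) : Fin n → ℝ := fun i => (z i : ℝ)

/-- Dot product of an integer coefficient vector with a real vector. -/
def dotIR {n : ℕ} (a : Fin n → ℤ) (x : Fin n → ℝ) : ℝ := ∑ i, (a i : ℝ) * x i

/-- A rational polyhedron in `ℝ^n`. -/
def IsRatPolyhedron {n : ℕ} (P : Set (Fin n → ℝ)) : Prop :=
  ∃ (m : ℕ) (C : Matrix (Fin m) (Fin n) ℚ) (d : Fin m → ℚ),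
    P = {x | ∀ i, ∑ j, (C i j : ℝ) * x j ≤ (d i : ℝ)}

/-- `⌊β⌋_{S,α} = max {αz : z ∈ S, αz ≤ β}`. -/
noncomputable def floorS {n : ℕ} (S : Set (Fin n → ℤ)) (a : Fin n → ℤ) (β : ℝ) : ℝ :=
  sSup {t : ℝ | ∃ z ∈ S, dotIR a (coeZR z) = t ∧ t ≤ β}

/-- `⌈β⌉_{S,α} = min {αz : z ∈ S, αz ≥ β}`. -/
noncomputable def ceilS {n : ℕ} (S : Set (Fin n → ℤ)) (a : Fin n → ℤ) (β : ℝ) : ℝ :=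
  sInf {t : ℝ | ∃ z ∈ S, dotIR a (coeZR z) = t ∧ β ≤ t}

/-- Points satisfying the S-CG cut `αx ≤ ⌊β⌋_{S,α}` derived from `αx ≤ β`
(the cut is `0x ≤ -1`, i.e. the empty set, if no `z ∈ S` satisfies `αz ≤ β`). -/
noncomputable def cutLe {n : ℕ} (S : Set (Fin n → ℤ)) (a : Fin n → ℤ) (β : ℝ) :
    Set (Fin n → ℝ) :=
  if ∃ z ∈ S, dotIR a (coeZR z) ≤ β then {x | dotIR a x ≤ floorS S a β} else ∅

/-- Points satisfying the S-CG cut `αx ≥ ⌈β⌉_{S,α}` derived from `αx ≥ β`. -/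
noncomputable def cutGe {n : ℕ} (S : Set (Fin n → ℤ)) (a : Fin n → ℤ) (β : ℝ) :
    Set (Fin n → ℝ) :=
  if ∃ z ∈ S, β ≤ dotIR a (coeZR z) then {x | ceilS S a β ≤ dotIR a x} else ∅

/-- `Π_P` for `P = {x : Ax ≤ b}`: pairs `(λA, λb)` with `λ ≥ 0`, `λA` integral and
`λb = max {λAx : x ∈ P}`. -/
def PiLe {n m : ℕ} (A : Matrix (Fin m) (Fin n) ℤ) (b : Fin m → ℤ) (P : Set (Fin n → ℝ)) :
    Set ((Fin n → ℤ) × ℝ) :=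
  {p | ∃ lam : Fin m → ℝ, (∀ i, 0 ≤ lam i)
      ∧ (∀ j, (p.1 j : ℝ) = ∑ i, lam i * (A i j : ℝ))
      ∧ (p.2 = ∑ i, lam i * (b i : ℝ))
      ∧ IsGreatest {t : ℝ | ∃ x ∈ P, dotIR p.1 x = t} p.2}

/-- `Π_{P↑}` for `P↑ = {x : Ax ≥ b}`: pairs `(λA, λb)` with `λ ≥ 0`, `λA` integral and
`λb = min {λAx : x ∈ P↑}`. -/
def PiGe {n m : ℕ} (A : Matrix (Fin m) (Fin n) ℤ) (b : Fin m → ℤ) (P : Set (Fin n → ℝ)) :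
    Set ((Fin n → ℤ) × ℝ) :=
  {p | ∃ lam : Fin m → ℝ, (∀ i, 0 ≤ lam i)
      ∧ (∀ j, (p.1 j : ℝ) = ∑ i, lam i * (A i j : ℝ))
      ∧ (p.2 = ∑ i, lam i * (b i : ℝ))
      ∧ IsLeast {t : ℝ | ∃ x ∈ P, dotIR p.1 x = t} p.2}

/-- `P_{S,Ω}` : intersection of the S-CG cuts `αx ≤ ⌊β⌋_{S,α}` over `(α,β) ∈ Ω`. -/
noncomputable def closLe {n : ℕ} (S : Set (Fin n → ℤ)) (Om : Set ((Fin n → ℤ) × ℝ)) :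
    Set (Fin n → ℝ) :=
  ⋂ p ∈ Om, cutLe S p.1 p.2

/-- `P↑_{S,Ω}` : intersection of the S-CG cuts `αx ≥ ⌈β⌉_{S,α}` over `(α,β) ∈ Ω`. -/
noncomputable def closGe {n : ℕ} (S : Set (Fin n → ℤ)) (Om : Set ((Fin n → ℤ) × ℝ)) :
    Set (Fin n → ℝ) :=
  ⋂ p ∈ Om, cutGe S p.1 p.2

/-- The cone generated by a finite family of vectors. -/
def coneOf {n : ℕ} {ι : Type} [Fintype ι] (w : ι → Fin n → ℝ) : Set (Fin n → ℝ) :=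
  {x | ∃ c : ι → ℝ, (∀ j, 0 ≤ c j) ∧ x = ∑ j, c j • w j}

/-- The unit vectors `e^1, …, e^{n₁}` of `ℝ^{n₁} × {0}` inside `ℝ^n`. -/
def unitVecs {n : ℕ} (n₁ : ℕ) : Fin n₁ → Fin n → ℝ :=
  fun i j => if (j : ℕ) = (i : ℕ) then 1 else 0

/-- The recession cone of a subset of `ℝ^n`. -/
def recCone {n : ℕ} (P : Set (Fin n → ℝ)) : Set (Fin n → ℝ) :=
  {r | ∀ x ∈ P, ∀ t : ℝ, 0 ≤ t → x + t • r ∈ P}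

/-- The lineality space of a subset of `ℝ^n`. -/
def linealitySp {n : ℕ} (P : Set (Fin n → ℝ)) : Set (Fin n → ℝ) :=
  {r | ∀ x ∈ P, ∀ t : ℝ, x + t • r ∈ P}

/-- The recession cone of a subset of `ℝ^n × ℝ`. -/
def recConePair {n : ℕ} (H : Set ((Fin n → ℝ) × ℝ)) : Set ((Fin n → ℝ) × ℝ) :=
  {r | ∀ p ∈ H, ∀ t : ℝ, 0 ≤ t → p + t • r ∈ H}

/-- A rational polyhedron in `ℝ^n × ℝ`. -/
def IsRatPolyhedronPair {n : ℕ} (H : Set ((Fin n → ℝ) × ℝ)) : Prop :=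
  ∃ (m : ℕ) (C : Matrix (Fin m) (Fin n) ℚ) (c d : Fin m → ℚ),
    H = {p | ∀ i, ∑ j, (C i j : ℝ) * p.1 j + (c i : ℝ) * p.2 ≤ (d i : ℝ)}

/-- Auxiliary sequence: `MseqAux c M1 k = (M_{k+1}, M_1 ⋯ M_{k+1})` where `M_1 = M1` and
`M_i = (c · M_1 ⋯ M_{i-1})^{i-1} · M_1` for `i ≥ 2` (with `c = 2mB`). -/
def MseqAux (c M1 : ℤ) : ℕ → ℤ × ℤ
  | 0 => (M1, M1)
  | k + 1 =>
      let p := (MseqAux c M1 k).2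
      let next := (c * p) ^ (k + 1) * M1
      (next, p * next)

/-- `Mseq c M1 k = M_{k+1}`. -/
def Mseq (c M1 : ℤ) (k : ℕ) : ℤ := (MseqAux c M1 k).1

/-- `M = M_1 ⋯ M_{m-1}` if `m ≥ 2`, and `M = 1` if `m = 1`, where
`M_1 = 2(mB + 2D)` and `M_i = (2mB · M_1 ⋯ M_{i-1})^{i-1} · M_1`. -/
def bigM (m : ℕ) (B D : ℤ) : ℤ :=
  ∏ k ∈ Finset.range (m - 1), Mseq (2 * (m : ℤ) * B) (2 * ((m : ℤ) * B + 2 * D)) k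

/-- `⌊β⌋_{S,α}` for a mixed-integer set `S ⊆ ℤ^n × ℝ^l`. -/
noncomputable def floorMix {n l : ℕ} (S : Set ((Fin n → ℤ) × (Fin l → ℝ)))
    (a : Fin n → ℤ) (β : ℝ) : ℝ :=
  sSup {t : ℝ | ∃ p ∈ S, dotIR a (coeZR p.1) = t ∧ t ≤ β}

/-- Points of `ℝ^n × ℝ^l` satisfying the S-CG cut `αx ≤ ⌊β⌋_{S,α}` for a mixed-integer
set `S` (the cut is `0x ≤ -1` if no `(x,y) ∈ S` satisfies `αx ≤ β`). -/
noncomputable def cutMix {n l : ℕ} (S : Set ((Fin n → ℤ) × (Fin l → ℝ)))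
    (a : Fin n → ℤ) (β : ℝ) : Set ((Fin n → ℝ) × (Fin l → ℝ)) :=
  if ∃ p ∈ S, dotIR a (coeZR p.1) ≤ β then {q | dotIR a q.1 ≤ floorMix S a β} else ∅

/-- A rational polyhedron in `ℝ^n × ℝ^l`. -/
def IsRatPolyhedronProd {n l : ℕ} (P : Set ((Fin n → ℝ) × (Fin l → ℝ))) : Prop :=
  ∃ (m : ℕ) (A : Matrix (Fin m) (Fin n) ℚ) (C : Matrix (Fin m) (Fin l) ℚ) (d : Fin m → ℚ),
    P = {p | ∀ i, ∑ j, (A i j : ℝ) * p.1 j + ∑ j, (C i j : ℝ) * p.2 j ≤ (d i : ℝ)}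
namespace SCGaux


variable {n : ℕ}

def dotII {n : ℕ} (a z : Fin n → ℤ) : ℤ := ∑ i, a i * z i

lemma dotIR_coe (a z : Fin n → ℤ) : dotIR a (coeZR z) = (dotII a z : ℝ) := by
  simp [dotIR, dotII, coeZR]

lemma mem_coneOf_smul {ι : Type} [Fintype ι] (w : ι → Fin n → ℝ) (t : ι) {e : ℝ}
    (he : 0 ≤ e) : e • w t ∈ coneOf w := by
  classical
  refine ⟨fun s => if s = t then e else 0, fun s => by positivity, ?_⟩
  rw [Finset.sum_eq_single t] <;> simp +contextual

lemma mem_coneOf_self {ι : Type} [Fintype ι] (w : ι → Fin n → ℝ) (t : ι) :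
    w t ∈ coneOf w := by
  simpa using mem_coneOf_smul w t (zero_le_one)

lemma coneOf_add_mem {ι : Type} [Fintype ι] {w : ι → Fin n → ℝ} {x y : Fin n → ℝ}
    (hx : x ∈ coneOf w) (hy : y ∈ coneOf w) : x + y ∈ coneOf w := by
  obtain ⟨c, hc, rfl⟩ := hx
  obtain ⟨d, hd, rfl⟩ := hy
  exact ⟨c + d, fun j => add_nonneg (hc j) (hd j), by simp [add_smul, Finset.sum_add_distrib]⟩

lemma coneOf_smul_mem {ι : Type} [Fintype ι] {w : ι → Fin n → ℝ} {x : Fin n → ℝ}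
    {e : ℝ} (he : 0 ≤ e) (hx : x ∈ coneOf w) : e • x ∈ coneOf w := by
  obtain ⟨c, hc, rfl⟩ := hx
  exact ⟨fun j => e * c j, fun j => mul_nonneg he (hc j),
    by simp [Finset.smul_sum, smul_smul]⟩

lemma coneOf_subset {ι κ : Type} [Fintype ι] [Fintype κ] (w : ι → Fin n → ℝ)
    (u : κ → Fin n → ℝ) (h : ∀ t, u t ∈ coneOf w) : coneOf u ⊆ coneOf w := by
  rintro x ⟨c, hc, rfl⟩
  choose d hd1 hd2 using h
  refine ⟨fun j => ∑ t, c t * d t j, fun j => Finset.sum_nonneg fun t _ =>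
    mul_nonneg (hc t) (hd1 t j), ?_⟩
  rw [Finset.sum_congr rfl (fun t (_ : t ∈ Finset.univ) => by rw [hd2 t, Finset.smul_sum])]
  rw [Finset.sum_comm]
  refine Finset.sum_congr rfl fun j _ => ?_
  rw [Finset.sum_smul]
  exact Finset.sum_congr rfl fun t _ => by rw [smul_smul]

lemma coneOf_smul_pos {ι : Type} [Fintype ι] (w : ι → Fin n → ℝ) (r : ι → ℝ)
    (hr : ∀ t, 0 < r t) : coneOf (fun t => r t • w t) = coneOf w := by
  apply Set.Subset.antisymm
  · exact coneOf_subset _ _ fun t => mem_coneOf_smul w t (hr t).le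
  · refine coneOf_subset _ _ fun t => ?_
    have : w t = (r t)⁻¹ • (r t • w t) := by
      rw [smul_smul, inv_mul_cancel₀ (hr t).ne', one_smul]
    rw [this]
    exact mem_coneOf_smul _ t (inv_nonneg.2 (hr t).le)

lemma dot_combo (c : Fin n → ℝ) {ι : Type} [Fintype ι] (u : ι → Fin n → ℝ) (lam : ι → ℝ) :
    ∑ i, c i * (∑ t, lam t • u t) i = ∑ t, lam t * (∑ i, c i * u t i) := by
  have h1 : ∀ i, (∑ t, lam t • u t) i = ∑ t, lam t * u t i := by
    intro i; simp [Finset.sum_apply]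
  simp_rw [h1, Finset.mul_sum]
  rw [Finset.sum_comm]
  exact Finset.sum_congr rfl fun t _ => Finset.sum_congr rfl fun i _ => by ring


variable {ι : Type} [Fintype ι]

lemma sum_partition (γ : ι → ℝ) (f : ι → ℝ) :
    ∑ t ∈ Finset.univ.filter (fun t => 0 < γ t), f t
      + ∑ t ∈ Finset.univ.filter (fun t => γ t < 0), f t
      + ∑ t ∈ Finset.univ.filter (fun t => γ t = 0), f t = ∑ t, f t := by
  classical
  have h1 := Finset.sum_filter_add_sum_filter_not Finset.univ (fun t => 0 < γ t) f
  have h2 := Finset.sum_filter_add_sum_filter_not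
    (Finset.univ.filter (fun t => ¬ 0 < γ t)) (fun t => γ t < 0) f
  have e1 : (Finset.univ.filter (fun t => ¬ 0 < γ t)).filter (fun t => γ t < 0)
      = Finset.univ.filter (fun t => γ t < 0) := by
    rw [Finset.filter_filter]
    ext t
    simp only [Finset.mem_filter, Finset.mem_univ, true_and]
    exact ⟨fun h => h.2, fun h => ⟨not_lt.2 h.le, h⟩⟩
  have e2 : (Finset.univ.filter (fun t => ¬ 0 < γ t)).filter (fun t => ¬ γ t < 0)
      = Finset.univ.filter (fun t => γ t = 0) := by
    rw [Finset.filter_filter]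
    ext t
    simp only [Finset.mem_filter, Finset.mem_univ, true_and]
    exact ⟨fun h => le_antisymm (not_lt.1 h.1) (not_lt.1 h.2),
      fun h => ⟨by rw [h]; exact lt_irrefl 0, by rw [h]; exact lt_irrefl 0⟩⟩
  rw [e1, e2] at h2
  rw [add_assoc, h2, h1]

lemma fm_scalar (γ lam W : ι → ℝ) (A B : ℝ)
    (hA : A = ∑ t ∈ Finset.univ.filter (fun t => 0 < γ t), lam t * γ t)
    (hB : B = ∑ s ∈ Finset.univ.filter (fun s => γ s < 0), lam s * (-γ s))
    (hBpos : 0 < B) :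
    (∑ t : {t : ι // γ t ≤ 0}, (if γ t.1 < 0 then lam t.1 * (1 - A / B) else lam t.1) * W t.1)
      + ∑ p : {t : ι // 0 < γ t} × {s : ι // γ s < 0},
          (lam p.1.1 * lam p.2.1 / B) * (γ p.1.1 * W p.2.1 - γ p.2.1 * W p.1.1)
      = ∑ t, lam t * W t := by
  classical
  have hBne : B ≠ 0 := hBpos.ne'
  -- convert subtype sums to filter sums
  have s1 : (∑ t : {t : ι // γ t ≤ 0}, (if γ t.1 < 0 then lam t.1 * (1 - A / B) else lam t.1) * W t.1)
      = ∑ t ∈ Finset.univ.filter (fun t => γ t ≤ 0),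
          (if γ t < 0 then lam t * (1 - A / B) else lam t) * W t :=
    (Finset.sum_subtype (p := fun t => γ t ≤ 0) (Finset.univ.filter (fun t => γ t ≤ 0))
      (fun x => by simp) (fun t => (if γ t < 0 then lam t * (1 - A / B) else lam t) * W t)).symm
  have s2 : (∑ p : {t : ι // 0 < γ t} × {s : ι // γ s < 0},
          (lam p.1.1 * lam p.2.1 / B) * (γ p.1.1 * W p.2.1 - γ p.2.1 * W p.1.1))
      = ∑ t ∈ Finset.univ.filter (fun t => 0 < γ t), ∑ s ∈ Finset.univ.filter (fun s => γ s < 0),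
          (lam t * lam s / B) * (γ t * W s - γ s * W t) := by
    rw [Fintype.sum_prod_type]
    rw [Finset.sum_congr rfl (fun (x : {t : ι // 0 < γ t}) (_ : x ∈ Finset.univ) =>
      (Finset.sum_subtype (p := fun s => γ s < 0) (Finset.univ.filter (fun s => γ s < 0))
        (fun x => by simp) (fun s => (lam x.1 * lam s / B) * (γ x.1 * W s - γ s * W x.1))).symm)]
    exact (Finset.sum_subtype (p := fun t => 0 < γ t) (Finset.univ.filter (fun t => 0 < γ t))
      (fun x => by simp) (fun t => ∑ s ∈ Finset.univ.filter (fun s => γ s < 0),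
        (lam t * lam s / B) * (γ t * W s - γ s * W t))).symm
  rw [s1, s2]
  set P := Finset.univ.filter (fun t => 0 < γ t) with hP
  set N := Finset.univ.filter (fun t => γ t < 0) with hN
  set Z := Finset.univ.filter (fun t => γ t = 0) with hZ
  -- split the ite sum
  have s3 : ∑ t ∈ Finset.univ.filter (fun t => γ t ≤ 0),
        (if γ t < 0 then lam t * (1 - A / B) else lam t) * W t
      = ∑ t ∈ N, (lam t * (1 - A / B)) * W t + ∑ t ∈ Z, lam t * W t := by
    simp_rw [ite_mul]
    rw [Finset.sum_ite]
    congr 1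
    · congr 1
      rw [Finset.filter_filter]
      ext t
      simp only [Finset.mem_filter, Finset.mem_univ, true_and, hN]
      exact ⟨fun h => h.2, fun h => ⟨h.le, h⟩⟩
    · congr 1
      rw [Finset.filter_filter]
      ext t
      simp only [Finset.mem_filter, Finset.mem_univ, true_and, hZ]
      exact ⟨fun h => le_antisymm h.1 (not_lt.1 h.2),
        fun h => ⟨h.le, by rw [h]; exact lt_irrefl 0⟩⟩
  rw [s3]
  -- handle the double sum
  have hNγ : ∑ s ∈ N, lam s * γ s = -B := by
    rw [hB]
    rw [← Finset.sum_neg_distrib]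
    exact Finset.sum_congr rfl fun s _ => by ring
  have s4 : ∑ t ∈ P, ∑ s ∈ N, (lam t * lam s / B) * (γ t * W s - γ s * W t)
      = A * ((∑ s ∈ N, lam s * W s) / B) + ∑ t ∈ P, lam t * W t := by
    have hd : ∀ t s, (lam t * lam s / B) * (γ t * W s - γ s * W t)
        = (lam t * γ t) * (lam s * (W s / B)) - (lam t * (W t / B)) * (lam s * γ s) := by
      intro t s; field_simp
    simp_rw [hd]
    rw [Finset.sum_congr rfl fun t (_ : t ∈ P) => Finset.sum_sub_distrib _ _]
    rw [Finset.sum_sub_distrib]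
    rw [← Finset.sum_mul_sum, ← Finset.sum_mul_sum]
    rw [← hA, hNγ]
    have e3 : ∑ s ∈ N, lam s * (W s / B) = (∑ s ∈ N, lam s * W s) / B := by
      rw [Finset.sum_div]
      exact Finset.sum_congr rfl fun s _ => by ring
    have e4 : ∑ t ∈ P, lam t * (W t / B) = (∑ t ∈ P, lam t * W t) / B := by
      rw [Finset.sum_div]
      exact Finset.sum_congr rfl fun s _ => by ring
    rw [e3, e4]
    field_simp
    try ring
  rw [s4]
  have s5 : ∑ t ∈ N, (lam t * (1 - A / B)) * W t = (1 - A / B) * ∑ t ∈ N, lam t * W t := by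
    rw [Finset.mul_sum]
    exact Finset.sum_congr rfl fun t _ => by ring
  rw [s5]
  rw [← sum_partition γ (fun t => lam t * W t)]
  field_simp
  ring

def QCone {n : ℕ} (K : Set (Fin n → ℝ)) : Prop :=
  ∃ (ι : Type) (_ : Fintype ι) (v : ι → Fin n → ℚ),
    K = coneOf (fun t i => ((v t i : ℚ) : ℝ))

lemma qcone_inter {n : ℕ} {K : Set (Fin n → ℝ)} (hK : QCone K) (c : Fin n → ℚ) :
    QCone (K ∩ {x | ∑ i, (c i : ℝ) * x i ≤ 0}) := by
  classical
  obtain ⟨ι, _, v, rfl⟩ := hK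
  obtain ⟨cR, hcR⟩ : ∃ cR : Fin n → ℝ, cR = fun i => ((c i : ℚ) : ℝ) := ⟨_, rfl⟩
  obtain ⟨w, hww⟩ : ∃ w : ι → Fin n → ℝ, w = fun t i => ((v t i : ℚ) : ℝ) := ⟨_, rfl⟩
  obtain ⟨γ, hγ⟩ : ∃ γ : ι → ℝ, γ = fun t => ∑ i, cR i * w t i := ⟨_, rfl⟩
  have γdef : ∀ t, γ t = ∑ i, cR i * w t i := fun t => by rw [hγ]
  have hKw : coneOf (fun t i => ((v t i : ℚ) : ℝ)) = coneOf w := by rw [hww]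
  have hHs : {x : Fin n → ℝ | ∑ i, (c i : ℝ) * x i ≤ 0} = {x | ∑ i, cR i * x i ≤ 0} := by
    rw [hcR]
  rw [hKw, hHs]
  obtain ⟨v₂, hv₂⟩ : ∃ v₂ : ({t : ι // γ t ≤ 0} ⊕ ({t : ι // 0 < γ t} × {s : ι // γ s < 0}))
      → Fin n → ℚ, v₂ = fun r => Sum.elim (fun t i => v t.1 i)
        (fun p i => (∑ i', c i' * v p.1.1 i') * v p.2.1 i
          - (∑ i', c i' * v p.2.1 i') * v p.1.1 i) r := ⟨_, rfl⟩
  refine ⟨{t : ι // γ t ≤ 0} ⊕ ({t : ι // 0 < γ t} × {s : ι // γ s < 0}), inferInstance, v₂, ?_⟩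
  obtain ⟨w₂, hw₂⟩ : ∃ w₂ : ({t : ι // γ t ≤ 0} ⊕ ({t : ι // 0 < γ t} × {s : ι // γ s < 0}))
      → Fin n → ℝ, w₂ = fun r i => ((v₂ r i : ℚ) : ℝ) := ⟨_, rfl⟩
  rw [show (coneOf fun t i => ((v₂ t i : ℚ) : ℝ)) = coneOf w₂ by rw [hw₂]]
  have w₂inl : ∀ t, w₂ (Sum.inl t) = w t.1 := by
    intro t; rw [hw₂, hv₂, hww]; rfl
  have w₂inr : ∀ p, w₂ (Sum.inr p) = γ p.1.1 • w p.2.1 - γ p.2.1 • w p.1.1 := by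
    intro p
    funext i
    rw [hw₂, hv₂]
    simp only [Sum.elim_inr, Pi.sub_apply, Pi.smul_apply, smul_eq_mul]
    rw [γdef, γdef, hww, hcR]
    push_cast
    ring
  have dotlin : ∀ (u₁ u₂ : Fin n → ℝ) (a b : ℝ),
      ∑ i, cR i * (a • u₁ - b • u₂) i = a * (∑ i, cR i * u₁ i) - b * (∑ i, cR i * u₂ i) := by
    intro u₁ u₂ a b
    simp only [Pi.sub_apply, Pi.smul_apply, smul_eq_mul, mul_sub, Finset.sum_sub_distrib,
      Finset.mul_sum]
    congr 1 <;> exact Finset.sum_congr rfl fun i _ => by ring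
  have dotw₂ : ∀ r, ∑ i, cR i * w₂ r i ≤ 0 := by
    rintro (t | p)
    · rw [w₂inl]
      rw [← γdef]
      exact t.2
    · rw [w₂inr p, dotlin, ← γdef, ← γdef]
      exact le_of_eq (by ring)
  apply Set.Subset.antisymm
  · rintro x ⟨⟨lam, hlam, rfl⟩, hxc⟩
    have hγsum : ∑ t, lam t * γ t ≤ 0 := by
      have h0 : ∑ i, cR i * (∑ t, lam t • w t) i ≤ 0 := hxc
      rw [dot_combo cR w lam] at h0
      calc ∑ t, lam t * γ t = ∑ t, lam t * (∑ i, cR i * w t i) := by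
            exact Finset.sum_congr rfl fun t _ => by rw [γdef]
        _ ≤ 0 := h0
    set A : ℝ := ∑ t ∈ Finset.univ.filter (fun t => 0 < γ t), lam t * γ t with hAdef
    set B : ℝ := ∑ s ∈ Finset.univ.filter (fun s => γ s < 0), lam s * (-γ s) with hBdef
    have hA0 : 0 ≤ A := Finset.sum_nonneg fun t ht =>
      mul_nonneg (hlam t) (Finset.mem_filter.1 ht).2.le
    have hB0 : 0 ≤ B := Finset.sum_nonneg fun t ht =>
      mul_nonneg (hlam t) (by linarith [(Finset.mem_filter.1 ht).2])
    have key : ∑ t, lam t * γ t = A - B := by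
      rw [← sum_partition γ (fun t => lam t * γ t), hAdef, hBdef]
      have hz : ∑ t ∈ Finset.univ.filter (fun t => γ t = 0), lam t * γ t = 0 :=
        Finset.sum_eq_zero fun t ht => by
          rw [(Finset.mem_filter.1 ht).2]; ring
      have hn : ∑ t ∈ Finset.univ.filter (fun t => γ t < 0), lam t * γ t
          = - ∑ s ∈ Finset.univ.filter (fun s => γ s < 0), lam s * (-γ s) := by
        rw [← Finset.sum_neg_distrib]
        exact Finset.sum_congr rfl fun s _ => by ring
      rw [hz, hn]
      ring
    have hAB : A ≤ B := by rw [key] at hγsum; linarith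
    by_cases hA : A = 0
    · have hsum0 : ∑ t ∈ Finset.univ.filter (fun t => 0 < γ t), lam t * γ t = 0 := by
        rw [← hAdef]; exact hA
      have hPzero : ∀ t ∈ Finset.univ.filter (fun t => 0 < γ t), lam t * γ t = 0 :=
        (Finset.sum_eq_zero_iff_of_nonneg (fun s hs =>
          mul_nonneg (hlam s) (Finset.mem_filter.1 hs).2.le)).1 hsum0
      obtain ⟨μ, hμdef⟩ : ∃ μ : ({t : ι // γ t ≤ 0} ⊕ ({t : ι // 0 < γ t} × {s : ι // γ s < 0})) → ℝ,
          μ = Sum.elim (fun t => lam t.1) (fun _ => 0) := ⟨_, rfl⟩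
      have hμinl : ∀ t, μ (Sum.inl t) = lam t.1 := by intro t; rw [hμdef]; rfl
      have hμinr : ∀ p, μ (Sum.inr p) = 0 := by intro p; rw [hμdef]; rfl
      refine ⟨μ, ?_, ?_⟩
      · rintro (t | p)
        · rw [hμinl]; exact hlam t.1
        · rw [hμinr]
      · rw [Fintype.sum_sum_type]
        have h2 : ∑ p : {t : ι // 0 < γ t} × {s : ι // γ s < 0},
            μ (Sum.inr p) • w₂ (Sum.inr p) = 0 :=
          Finset.sum_eq_zero fun p _ => by rw [hμinr, zero_smul]
        rw [h2, add_zero]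
        have h3 : ∑ t : {t : ι // γ t ≤ 0}, μ (Sum.inl t) • w₂ (Sum.inl t)
            = ∑ t ∈ Finset.univ.filter (fun t => γ t ≤ 0), lam t • w t := by
          rw [Finset.sum_subtype (p := fun t => γ t ≤ 0)
            (Finset.univ.filter (fun t => γ t ≤ 0)) (fun x => by simp)
            (fun t => lam t • w t)]
          refine Finset.sum_congr rfl fun t _ => ?_
          rw [hμinl t, w₂inl t]
        rw [h3]
        rw [Finset.sum_subset (Finset.filter_subset _ _)]
        intro t _ ht
        have hpos : 0 < γ t := by
          by_contra h
          exact ht (Finset.mem_filter.2 ⟨Finset.mem_univ t, not_lt.1 h⟩)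
        have hl0 : lam t = 0 := by
          have := hPzero t (Finset.mem_filter.2 ⟨Finset.mem_univ t, hpos⟩)
          rcases mul_eq_zero.1 this with h | h
          · exact h
          · exact absurd h hpos.ne'
        rw [hl0, zero_smul]
    · have hApos : 0 < A := lt_of_le_of_ne hA0 (Ne.symm hA)
      have hBpos : 0 < B := lt_of_lt_of_le hApos hAB
      obtain ⟨μ, hμdef⟩ : ∃ μ : ({t : ι // γ t ≤ 0} ⊕ ({t : ι // 0 < γ t} × {s : ι // γ s < 0})) → ℝ,
          μ = Sum.elim (fun t => if γ t.1 < 0 then lam t.1 * (1 - A / B) else lam t.1)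
            (fun p => lam p.1.1 * lam p.2.1 / B) := ⟨_, rfl⟩
      have hμinl : ∀ t, μ (Sum.inl t) = if γ t.1 < 0 then lam t.1 * (1 - A / B) else lam t.1 := by
        intro t; rw [hμdef]; rfl
      have hμinr : ∀ p, μ (Sum.inr p) = lam p.1.1 * lam p.2.1 / B := by
        intro p; rw [hμdef]; rfl
      refine ⟨μ, ?_, ?_⟩
      · rintro (t | p)
        · rw [hμinl]
          split
          · have h1 : A / B ≤ 1 := (div_le_one hBpos).2 hAB
            have h2 := hlam t.1
            nlinarith
          · exact hlam t.1
        · rw [hμinr]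
          have h1 := hlam p.1.1
          have h2 := hlam p.2.1
          positivity
      · funext i
        have hx : (∑ t, lam t • w t) i = ∑ t, lam t * w t i := by
          simp [Finset.sum_apply]
        rw [hx]
        have hr : (∑ r, μ r • w₂ r) i
            = (∑ t : {t : ι // γ t ≤ 0},
                (if γ t.1 < 0 then lam t.1 * (1 - A / B) else lam t.1) * w t.1 i)
              + ∑ p : {t : ι // 0 < γ t} × {s : ι // γ s < 0},
                  (lam p.1.1 * lam p.2.1 / B) * (γ p.1.1 * w p.2.1 i - γ p.2.1 * w p.1.1 i) := by
          rw [Finset.sum_apply, Fintype.sum_sum_type]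
          congr 1
          · refine Finset.sum_congr rfl fun t _ => ?_
            rw [hμinl t, w₂inl t]
            simp only [Pi.smul_apply, smul_eq_mul]
          · refine Finset.sum_congr rfl fun p _ => ?_
            rw [hμinr p, w₂inr p]
            simp only [Pi.smul_apply, smul_eq_mul, Pi.sub_apply]
            try ring
        rw [hr]
        exact (fm_scalar γ lam (fun t => w t i) A B hAdef hBdef hBpos).symm
  · rintro x ⟨μ, hμ, rfl⟩
    constructor
    · apply coneOf_subset w w₂ _ ⟨μ, hμ, rfl⟩
      rintro (t | p)
      · rw [w₂inl]; exact mem_coneOf_self w t.1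
      · rw [w₂inr p]
        have h1 : γ p.1.1 • w p.2.1 - γ p.2.1 • w p.1.1
            = γ p.1.1 • w p.2.1 + (-γ p.2.1) • w p.1.1 := by
          rw [neg_smul]; abel
        rw [h1]
        exact coneOf_add_mem (mem_coneOf_smul w _ p.1.2.le)
          (mem_coneOf_smul w _ (by linarith [p.2.2]))
    · show ∑ i, cR i * (∑ r, μ r • w₂ r) i ≤ 0
      rw [dot_combo cR w₂ μ]
      exact Finset.sum_nonpos fun r _ => mul_nonpos_of_nonneg_of_nonpos (hμ r) (dotw₂ r)

lemma qcone_univ {n : ℕ} : QCone (Set.univ : Set (Fin n → ℝ)) := by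
  classical
  refine ⟨Fin n × Bool, inferInstance,
    (fun p j => if j = p.1 then (if p.2 then (1:ℚ) else -1) else 0), ?_⟩
  refine Set.eq_of_subset_of_subset (fun x _ => ?_) (Set.subset_univ _)
  refine ⟨fun p => if p.2 then max (x p.1) 0 else max (-(x p.1)) 0, ?_, ?_⟩
  · intro p
    dsimp only
    split <;> exact le_max_right _ _
  · funext j
    rw [Finset.sum_apply, Fintype.sum_prod_type]
    have hk : ∀ k : Fin n,
        (∑ b : Bool, ((if (k, b).2 then max (x (k, b).1) 0 else max (-(x (k, b).1)) 0)
          • (fun j' => (((if j' = (k, b).1 then (if (k, b).2 then (1:ℚ) else -1) else 0) : ℚ) : ℝ))) j)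
        = if j = k then x k else 0 := by
      intro k
      rw [Fintype.sum_bool]
      by_cases h : j = k
      · simp only [h, if_true, Pi.smul_apply, smul_eq_mul, if_pos rfl]
        push_cast
        have := max_zero_sub_eq_self (x k)
        ring_nf
        linarith [max_zero_sub_eq_self (x k)]
      · simp [h]
    rw [Finset.sum_congr rfl fun k _ => hk k]
    simp

lemma qcone_poly {n m : ℕ} (a : Fin m → Fin n → ℚ) :
    QCone {x : Fin n → ℝ | ∀ i, ∑ j, (a i j : ℝ) * x j ≤ 0} := by
  classical
  have key : ∀ T : Finset (Fin m),
      QCone {x : Fin n → ℝ | ∀ i ∈ T, ∑ j, (a i j : ℝ) * x j ≤ 0} := by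
    intro T
    induction T using Finset.induction_on with
    | empty =>
        have : {x : Fin n → ℝ | ∀ i ∈ (∅ : Finset (Fin m)), ∑ j, (a i j : ℝ) * x j ≤ 0}
            = Set.univ := by
          ext x; simp
        rw [this]; exact qcone_univ
    | @insert i T hiT ih =>
        have : {x : Fin n → ℝ | ∀ i' ∈ insert i T, ∑ j, (a i' j : ℝ) * x j ≤ 0}
            = {x : Fin n → ℝ | ∀ i' ∈ T, ∑ j, (a i' j : ℝ) * x j ≤ 0}
              ∩ {x : Fin n → ℝ | ∑ j, (a i j : ℝ) * x j ≤ 0} := by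
          ext x
          simp only [Set.mem_setOf_eq, Set.mem_inter_iff, Finset.mem_insert]
          constructor
          · intro h
            exact ⟨fun i' hi' => h i' (Or.inr hi'), h i (Or.inl rfl)⟩
          · rintro ⟨h1, h2⟩ i' (rfl | hi')
            · exact h2
            · exact h1 i' hi'
        rw [this]
        exact qcone_inter ih (a i)
  have h := key Finset.univ
  have : {x : Fin n → ℝ | ∀ i ∈ Finset.univ, ∑ j, (a i j : ℝ) * x j ≤ 0}
      = {x : Fin n → ℝ | ∀ i, ∑ j, (a i j : ℝ) * x j ≤ 0} := by
    ext x; simp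
  rwa [this] at h

lemma rat_scale {n : ℕ} (v : Fin n → ℚ) :
    ∃ (N : ℕ) (g : Fin n → ℤ), 0 < N ∧ ∀ i, ((g i : ℤ) : ℚ) = (N : ℚ) * v i := by
  classical
  refine ⟨∏ k, (v k).den, fun i => (v i).num * (((∏ k, (v k).den) / (v i).den : ℕ) : ℤ), ?_, ?_⟩
  · exact Finset.prod_pos fun i _ => (v i).pos
  · intro i
    show (((v i).num * (((∏ k, (v k).den) / (v i).den : ℕ) : ℤ) : ℤ) : ℚ)
      = ((∏ k, (v k).den : ℕ) : ℚ) * v i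
    obtain ⟨t, ht⟩ : (v i).den ∣ ∏ k, (v k).den := Finset.dvd_prod_of_mem _ (Finset.mem_univ i)
    rw [ht, Nat.mul_div_cancel_left t (v i).pos]
    push_cast
    have h2 : (v i) * ((v i).den : ℚ) = ((v i).num : ℚ) := Rat.mul_den_eq_num _
    calc ((v i).num : ℚ) * (t : ℚ) = (t : ℚ) * ((v i) * ((v i).den : ℚ)) := by rw [h2]; ring
      _ = ((v i).den : ℚ) * (t : ℚ) * v i := by ring

lemma exists_int_gens {n mR : ℕ} (CR : Matrix (Fin mR) (Fin n) ℚ) :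
    ∃ (ι : Type) (_ : Fintype ι) (g : ι → Fin n → ℤ),
      {x : Fin n → ℝ | ∀ i, ∑ j, (CR i j : ℝ) * x j ≤ 0} = coneOf (fun t => coeZR (g t)) := by
  obtain ⟨ι, hι, v, hv⟩ := qcone_poly (fun i j => CR i j)
  choose N g hN hg using fun t => rat_scale (v t)
  refine ⟨ι, hι, g, ?_⟩
  rw [hv]
  have heq : (fun t => coeZR (g t)) = fun t => ((N t : ℝ)) • (fun i => ((v t i : ℚ) : ℝ)) := by
    funext t i
    simp only [coeZR, Pi.smul_apply, smul_eq_mul]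
    have h := hg t i
    have h2 := congrArg (fun q : ℚ => (q : ℝ)) h
    push_cast at h2
    exact h2
  rw [heq, coneOf_smul_pos _ _ (fun t => by exact_mod_cast hN t)]

lemma exists_int_kernel {n mR : ℕ} (CR : Matrix (Fin mR) (Fin n) ℚ) (a : Fin n → ℤ)
    (l : Fin n → ℝ) (hl : ∀ i, ∑ j, (CR i j : ℝ) * l j = 0)
    (hal : ∑ j, (a j : ℝ) * l j ≠ 0)
    (hcon : ∀ w : Fin n → ℤ, (∀ i, ∑ j, (CR i j : ℝ) * (w j : ℝ) = 0) → (∑ j, a j * w j) = 0) :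
    False := by
  classical
  apply hal
  set Lrow : Fin mR → ((Fin n → ℚ) →ₗ[ℚ] ℚ) := fun i => (LinearMap.proj i).comp CR.mulVecLin
    with hLrow
  set K : (Fin n → ℚ) →ₗ[ℚ] ℚ :=
    (LinearMap.proj (0 : Fin 1)).comp (Matrix.of fun (_ : Fin 1) j => ((a j : ℤ) : ℚ)).mulVecLin
    with hK
  have hLrow_apply : ∀ i q, Lrow i q = ∑ j, CR i j * q j := by
    intro i q
    simp [hLrow, Matrix.mulVecLin, Matrix.mulVec, dotProduct]
  have hK_apply : ∀ q, K q = ∑ j, ((a j : ℤ) : ℚ) * q j := by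
    intro q
    simp [hK, Matrix.mulVecLin, Matrix.mulVec, dotProduct]
  have hker : ⨅ i, LinearMap.ker (Lrow i) ≤ LinearMap.ker K := by
    intro q hq
    simp only [Submodule.mem_iInf, LinearMap.mem_ker] at hq
    obtain ⟨N, g, hN, hg⟩ := rat_scale q
    have hzero : ∀ i, ∑ j, CR i j * ((g j : ℤ) : ℚ) = 0 := by
      intro i
      have h1 : ∑ j, CR i j * ((g j : ℤ) : ℚ) = (N : ℚ) * ∑ j, CR i j * q j := by
        rw [Finset.mul_sum]
        refine Finset.sum_congr rfl fun j _ => ?_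
        rw [hg j]; ring
      rw [h1]
      have := hq i
      rw [hLrow_apply] at this
      rw [this, mul_zero]
    have hreal : ∀ i, ∑ j, (CR i j : ℝ) * ((g j : ℤ) : ℝ) = 0 := by
      intro i
      have h2 := congrArg (fun q : ℚ => (q : ℝ)) (hzero i)
      push_cast at h2
      exact h2
    have hint := hcon g hreal
    rw [LinearMap.mem_ker, hK_apply]
    have hq2 : (N : ℚ) * (∑ j, ((a j : ℤ) : ℚ) * q j) = 0 := by
      have h3 : (N : ℚ) * (∑ j, ((a j : ℤ) : ℚ) * q j) = ∑ j, ((a j : ℤ) : ℚ) * ((g j : ℤ) : ℚ) := by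
        rw [Finset.mul_sum]
        refine Finset.sum_congr rfl fun j _ => ?_
        rw [hg j]; ring
      rw [h3]
      have h4 := congrArg (fun z : ℤ => (z : ℚ)) hint
      push_cast at h4
      exact h4
    have hNne : (N : ℚ) ≠ 0 := by exact_mod_cast hN.ne'
    exact (mul_eq_zero.1 hq2).resolve_left hNne
  have hspan := mem_span_of_iInf_ker_le_ker (L := Lrow) (K := K) hker
  obtain ⟨μ, hμ⟩ := (Submodule.mem_span_range_iff_exists_fun (R := ℚ)).1 hspan
  have hcol : ∀ j, ((a j : ℤ) : ℚ) = ∑ i, μ i * CR i j := by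
    intro j
    have h5 := congrArg (fun f : (Fin n → ℚ) →ₗ[ℚ] ℚ => f (Pi.single j 1)) hμ
    simp only [LinearMap.coe_sum, Finset.sum_apply, LinearMap.smul_apply, smul_eq_mul] at h5
    rw [hK_apply] at h5
    have h6 : ∀ i : Fin mR, Lrow i (Pi.single j 1) = CR i j := by
      intro i
      rw [hLrow_apply]
      rw [Finset.sum_eq_single j]
      · simp
      · intro b _ hb; simp [Pi.single_eq_of_ne hb]
      · intro h; exact absurd (Finset.mem_univ j) h
    rw [Finset.sum_congr rfl fun i _ => by rw [h6 i]] at h5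
    have h7 : ∑ j', ((a j' : ℤ) : ℚ) * (Pi.single j (1:ℚ) : Fin n → ℚ) j' = ((a j : ℤ) : ℚ) := by
      rw [Finset.sum_eq_single j]
      · simp
      · intro b _ hb; simp [Pi.single_eq_of_ne hb]
      · intro h; exact absurd (Finset.mem_univ j) h
    rw [h7] at h5
    exact h5.symm
  calc ∑ j, (a j : ℝ) * l j = ∑ j, (∑ i, (μ i : ℝ) * (CR i j : ℝ)) * l j := by
        refine Finset.sum_congr rfl fun j _ => ?_
        congr 1
        have h8 := congrArg (fun q : ℚ => (q : ℝ)) (hcol j)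
        push_cast at h8
        exact h8
    _ = ∑ i, (μ i : ℝ) * (∑ j, (CR i j : ℝ) * l j) := by
        simp_rw [Finset.sum_mul, Finset.mul_sum]
        rw [Finset.sum_comm]
        exact Finset.sum_congr rfl fun i _ => Finset.sum_congr rfl fun j _ => by ring
    _ = 0 := by
        rw [Finset.sum_congr rfl fun i _ => by rw [hl i, mul_zero]]
        exact Finset.sum_const_zero

lemma slope_nonpos {c s d : ℝ} (h : ∀ t : ℝ, 0 ≤ t → c + t * s ≤ d) : s ≤ 0 := by
  by_contra hs
  push_neg at hs
  have hc : c ≤ d := by simpa using h 0 le_rfl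
  have ht : 0 ≤ (d - c + 1) / s := div_nonneg (by linarith) hs.le
  have := h _ ht
  rw [div_mul_cancel₀ _ hs.ne'] at this
  linarith

lemma slope_zero {c s d : ℝ} (h : ∀ t : ℝ, c + t * s ≤ d) : s = 0 := by
  have h1 : s ≤ 0 := slope_nonpos fun t _ => h t
  have h2 : -s ≤ 0 := slope_nonpos (c := c) (d := d) fun t _ => by
    have := h (-t); linarith [this]
  linarith

lemma row_eval {n : ℕ} (cR : Fin n → ℝ) (x y : Fin n → ℝ) (t : ℝ) :
    ∑ j, cR j * (x + t • y) j = ∑ j, cR j * x j + t * ∑ j, cR j * y j := by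
  simp_rw [Pi.add_apply, Pi.smul_apply, smul_eq_mul, mul_add, Finset.sum_add_distrib,
    Finset.mul_sum]
  congr 1
  exact Finset.sum_congr rfl fun j _ => by ring

lemma convex_poly {n mR : ℕ} (CR : Matrix (Fin mR) (Fin n) ℚ) (dR : Fin mR → ℚ) :
    Convex ℝ {x : Fin n → ℝ | ∀ i, ∑ j, (CR i j : ℝ) * x j ≤ (dR i : ℝ)} := by
  intro x hx y hy α β hα hβ hαβ
  intro i
  have hxi := hx i
  have hyi := hy i
  have heq : ∑ j, (CR i j : ℝ) * (α • x + β • y) j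
      = α * ∑ j, (CR i j : ℝ) * x j + β * ∑ j, (CR i j : ℝ) * y j := by
    simp_rw [Pi.add_apply, Pi.smul_apply, smul_eq_mul, mul_add, Finset.sum_add_distrib,
      Finset.mul_sum]
    congr 1 <;> exact Finset.sum_congr rfl fun j _ => by ring
  rw [heq]
  calc α * ∑ j, (CR i j : ℝ) * x j + β * ∑ j, (CR i j : ℝ) * y j
      ≤ α * (dR i : ℝ) + β * (dR i : ℝ) :=
        add_le_add (mul_le_mul_of_nonneg_left hxi hα) (mul_le_mul_of_nonneg_left hyi hβ)
    _ = (dR i : ℝ) := by rw [← add_mul, hαβ, one_mul]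

lemma conv_add_rec {n mR : ℕ} (CR : Matrix (Fin mR) (Fin n) ℚ) (dR : Fin mR → ℚ)
    (S : Set (Fin n → ℤ))
    (hS : S = {z : Fin n → ℤ | ∀ i, ∑ j, (CR i j : ℝ) * (z j : ℝ) ≤ (dR i : ℝ)})
    (g : Fin n → ℤ) (hg : ∀ i, ∑ j, (CR i j : ℝ) * (g j : ℝ) ≤ 0)
    {e : ℝ} (he : 0 ≤ e) {x : Fin n → ℝ} (hx : x ∈ convexHull ℝ (coeZR '' S)) :
    x + e • coeZR g ∈ convexHull ℝ (coeZR '' S) := by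
  classical
  have hXv : ∀ y ∈ coeZR '' S, y + e • coeZR g ∈ convexHull ℝ (coeZR '' S) := by
    rintro y ⟨z, hz, rfl⟩
    set k : ℕ := ⌈e⌉₊ + 1 with hk
    have hk0 : (0:ℝ) < (k : ℝ) := by positivity
    have hek : e ≤ (k : ℝ) := (Nat.le_ceil e).trans (by exact_mod_cast Nat.le_succ ⌈e⌉₊)
    have hzk : z + (k : ℤ) • g ∈ S := by
      rw [hS]
      intro i
      have hcast : ∀ j, (((z + (k : ℤ) • g) j : ℤ) : ℝ) = (z j : ℝ) + (k : ℝ) * (g j : ℝ) := by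
        intro j
        simp only [Pi.add_apply, Pi.smul_apply, smul_eq_mul]
        push_cast
        ring
      have h1 : ∑ j, (CR i j : ℝ) * (((z + (k : ℤ) • g) j : ℤ) : ℝ)
          = ∑ j, (CR i j : ℝ) * (z j : ℝ) + (k : ℝ) * ∑ j, (CR i j : ℝ) * (g j : ℝ) := by
        rw [Finset.sum_congr rfl fun j _ => by rw [hcast j]]
        simp_rw [mul_add, Finset.sum_add_distrib, Finset.mul_sum]
        congr 1
        exact Finset.sum_congr rfl fun j _ => by ring
      show ∑ j, (CR i j : ℝ) * (((z + (k : ℤ) • g) j : ℤ) : ℝ) ≤ (dR i : ℝ)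
      rw [h1]
      have hz' : ∑ j, (CR i j : ℝ) * (z j : ℝ) ≤ (dR i : ℝ) := by
        rw [hS] at hz; exact hz i
      nlinarith [hg i]
    have hmem1 : coeZR z ∈ convexHull ℝ (coeZR '' S) :=
      subset_convexHull ℝ _ (Set.mem_image_of_mem _ hz)
    have hmem2 : coeZR (z + (k : ℤ) • g) ∈ convexHull ℝ (coeZR '' S) :=
      subset_convexHull ℝ _ (Set.mem_image_of_mem _ hzk)
    have hcomb := (convex_convexHull ℝ (coeZR '' S)) hmem1 hmem2
      (a := 1 - e / k) (b := e / k)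
      (by rw [sub_nonneg, div_le_one hk0]; exact hek)
      (by positivity) (by ring)
    have heq : (1 - e / k) • coeZR z + (e / k) • coeZR (z + (k : ℤ) • g)
        = coeZR z + e • coeZR g := by
      funext j
      simp only [Pi.add_apply, Pi.smul_apply, smul_eq_mul, coeZR]
      push_cast
      field_simp
      ring
    rwa [heq] at hcomb
  have himg : (e • coeZR g) +ᵥ (coeZR '' S) ⊆ convexHull ℝ (coeZR '' S) := by
    rintro y ⟨y0, hy0, rfl⟩
    simpa [vadd_eq_add, add_comm] using hXv y0 hy0
  have h2 : (e • coeZR g) +ᵥ convexHull ℝ (coeZR '' S) ⊆ convexHull ℝ (coeZR '' S) := by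
    rw [← convexHull_vadd]
    exact convexHull_min himg (convex_convexHull ℝ _)
  have h3 : x + e • coeZR g = (e • coeZR g) +ᵥ x := by rw [vadd_eq_add, add_comm]
  rw [h3]
  exact h2 ⟨x, hx, rfl⟩

lemma conv_add_combo {n mR : ℕ} (CR : Matrix (Fin mR) (Fin n) ℚ) (dR : Fin mR → ℚ)
    (S : Set (Fin n → ℤ))
    (hS : S = {z : Fin n → ℤ | ∀ i, ∑ j, (CR i j : ℝ) * (z j : ℝ) ≤ (dR i : ℝ)})
    {ι : Type} [Fintype ι] (g : ι → Fin n → ℤ)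
    (hg : ∀ t i, ∑ j, (CR i j : ℝ) * (g t j : ℝ) ≤ 0)
    (e : ι → ℝ) (he : ∀ t, 0 ≤ e t) {x : Fin n → ℝ}
    (hx : x ∈ convexHull ℝ (coeZR '' S)) :
    x + ∑ t, e t • coeZR (g t) ∈ convexHull ℝ (coeZR '' S) := by
  classical
  have key : ∀ F : Finset ι, x + ∑ t ∈ F, e t • coeZR (g t) ∈ convexHull ℝ (coeZR '' S) := by
    intro F
    induction F using Finset.induction_on with
    | empty => simpa using hx
    | @insert b F hbF ih =>
        rw [Finset.sum_insert hbF]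
        have heq : x + (e b • coeZR (g b) + ∑ t ∈ F, e t • coeZR (g t))
            = (x + ∑ t ∈ F, e t • coeZR (g t)) + e b • coeZR (g b) := by abel
        rw [heq]
        exact conv_add_rec CR dR S hS (g b) (hg b) (he b) ih
  simpa using key Finset.univ

lemma crux {n mR : ℕ} (CR : Matrix (Fin mR) (Fin n) ℚ) (dR : Fin mR → ℚ)
    (S : Set (Fin n → ℤ))
    (hS : S = {z : Fin n → ℤ | ∀ i, ∑ j, (CR i j : ℝ) * (z j : ℝ) ≤ (dR i : ℝ)})
    (hSne : S.Nonempty)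
    (hSint : {z : Fin n → ℤ | coeZR z ∈ convexHull ℝ (coeZR '' S)} = S)
    (Pc Rc L : Set (Fin n → ℝ))
    (hdec : convexHull ℝ (coeZR '' S) = Pc + Rc + L)
    (hRrec : Rc = recCone (Pc + Rc))
    (a : Fin n → ℤ) (l : Fin n → ℝ) (hlL : l ∈ linealitySp (convexHull ℝ (coeZR '' S)))
    (hla : ∑ j, (a j : ℝ) * l j ≠ 0)
    (z₀ : Fin n → ℤ) (hz₀ : coeZR z₀ ∈ Pc + (Rc + -Rc) + L) :
    ∃ z ∈ S, (∑ i, a i * z i) = ∑ i, a i * z₀ i := by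
  classical
  -- convex hull sits inside the polyhedron
  have hcs : convexHull ℝ (coeZR '' S)
      ⊆ {x : Fin n → ℝ | ∀ i, ∑ j, (CR i j : ℝ) * x j ≤ (dR i : ℝ)} := by
    apply convexHull_min _ (convex_poly CR dR)
    rintro y ⟨z, hz, rfl⟩
    rw [hS] at hz
    exact hz
  obtain ⟨zstar, hzstar⟩ := hSne
  have hx₀mem : coeZR zstar ∈ convexHull ℝ (coeZR '' S) :=
    subset_convexHull ℝ _ (Set.mem_image_of_mem _ hzstar)
  -- L is inside the kernel of CR
  have hLker : ∀ i, ∑ j, (CR i j : ℝ) * l j = 0 := by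
    intro i
    apply slope_zero (c := ∑ j, (CR i j : ℝ) * (coeZR zstar) j) (d := (dR i : ℝ))
    intro t
    have hmem := hlL _ hx₀mem t
    have h6 := hcs hmem i
    rw [row_eval] at h6
    exact h6
  -- find an integer kernel vector with positive pairing
  have hw : ∃ w : Fin n → ℤ, (∀ i, ∑ j, (CR i j : ℝ) * (w j : ℝ) = 0)
      ∧ (∑ j, a j * w j) ≠ 0 := by
    by_contra hc
    push_neg at hc
    exact exists_int_kernel CR a l hLker hla fun w hwk => hc w hwk
  obtain ⟨w₀, hw₀ker, hw₀ne⟩ := hw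
  obtain ⟨w, hwker, hwpos⟩ : ∃ w : Fin n → ℤ, (∀ i, ∑ j, (CR i j : ℝ) * (w j : ℝ) = 0)
      ∧ 0 < ∑ j, a j * w j := by
    rcases lt_trichotomy (∑ j, a j * w₀ j) 0 with h | h | h
    · refine ⟨-w₀, ?_, ?_⟩
      · intro i
        have h7 : ∑ j, (CR i j : ℝ) * (((-w₀) j : ℤ) : ℝ)
            = -∑ j, (CR i j : ℝ) * ((w₀ j : ℤ) : ℝ) := by
          rw [← Finset.sum_neg_distrib]
          refine Finset.sum_congr rfl fun j _ => ?_
          simp only [Pi.neg_apply]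
          push_cast
          ring
        rw [h7, hw₀ker i, neg_zero]
      · have h8 : ∑ j, a j * (-w₀) j = -∑ j, a j * w₀ j := by
          rw [← Finset.sum_neg_distrib]
          refine Finset.sum_congr rfl fun j _ => ?_
          simp only [Pi.neg_apply]
          ring
        rw [h8]
        linarith
    · exact absurd h hw₀ne
    · exact ⟨w₀, hw₀ker, h⟩
  set d : ℤ := ∑ j, a j * w j with hd
  have hd0 : 0 < d := hwpos
  -- decompose z₀
  rw [Set.mem_add] at hz₀
  obtain ⟨pq, hpq, lv, hlvL, h1⟩ := hz₀
  rw [Set.mem_add] at hpq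
  obtain ⟨p, hpP, q, hq, h2⟩ := hpq
  rw [Set.mem_add] at hq
  obtain ⟨r₁, hr₁, r₂', hr₂', h3⟩ := hq
  have hr₂ : -r₂' ∈ Rc := Set.mem_neg.1 hr₂'
  have hy₀ : coeZR z₀ + -r₂' ∈ convexHull ℝ (coeZR '' S) := by
    rw [hdec]
    have hmem : (p + r₁) + lv ∈ Pc + Rc + L := Set.add_mem_add (Set.add_mem_add hpP hr₁) hlvL
    have heq : coeZR z₀ + -r₂' = (p + r₁) + lv := by
      rw [← h1, ← h2, ← h3]; abel
    rw [heq]; exact hmem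
  -- -r₂' is a recession direction of the polyhedron
  have hx₀dec : coeZR zstar ∈ Pc + Rc + L := by rw [← hdec]; exact hx₀mem
  rw [Set.mem_add] at hx₀dec
  obtain ⟨uu, huPR, l₀, hl₀, h4⟩ := hx₀dec
  have hr₂K : ∀ i, ∑ j, (CR i j : ℝ) * (-r₂') j ≤ 0 := by
    intro i
    apply slope_nonpos (c := ∑ j, (CR i j : ℝ) * (uu + l₀) j) (d := (dR i : ℝ))
    intro t ht
    have hmem2 : (uu + t • (-r₂')) + l₀ ∈ convexHull ℝ (coeZR '' S) := by
      rw [hdec]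
      exact Set.add_mem_add ((hRrec ▸ hr₂) uu huPR t ht) hl₀
    have h9 := hcs hmem2 i
    have heq2 : (uu + t • (-r₂')) + l₀ = (uu + l₀) + t • (-r₂') := by abel
    rw [heq2, row_eval] at h9
    exact h9
  -- express -r₂' in the integer-generated cone
  obtain ⟨ι, hι, g, hK⟩ := exists_int_gens CR
  have hr₂cone : -r₂' ∈ coneOf (fun t => coeZR (g t)) := by
    rw [← hK]
    exact hr₂K
  obtain ⟨cc, hcc0, hccsum⟩ := hr₂cone
  have hgK : ∀ t, ∀ i, ∑ j, (CR i j : ℝ) * ((g t j : ℤ) : ℝ) ≤ 0 := by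
    intro t
    have : coeZR (g t) ∈ {x : Fin n → ℝ | ∀ i, ∑ j, (CR i j : ℝ) * x j ≤ 0} := by
      rw [hK]
      exact mem_coneOf_self _ t
    exact this
  -- round up the coefficients to multiples of d
  have hdR : (0:ℝ) < (d : ℝ) := by exact_mod_cast hd0
  set mm : ι → ℤ := fun t => d * ⌈cc t / (d : ℝ)⌉ with hmm
  have hmge : ∀ t, cc t ≤ ((mm t : ℤ) : ℝ) := by
    intro t
    have h5 : cc t / (d : ℝ) ≤ (⌈cc t / (d : ℝ)⌉ : ℝ) := Int.le_ceil _
    have h10 := mul_le_mul_of_nonneg_left h5 hdR.le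
    have h11 : (d : ℝ) * (cc t / (d : ℝ)) = cc t := by field_simp
    rw [h11] at h10
    rw [hmm]
    push_cast
    exact h10
  have hmdvd : ∀ t, d ∣ mm t := fun t => Dvd.intro _ rfl
  set u : Fin n → ℤ := fun i => ∑ t, mm t * g t i with hu
  have hucast : coeZR u = ∑ t, ((mm t : ℤ) : ℝ) • coeZR (g t) := by
    funext i
    rw [Finset.sum_apply]
    simp only [coeZR, hu, Pi.smul_apply, smul_eq_mul]
    push_cast
    rfl
  -- z₀ + u lies in the convex hull, hence in S
  have hz₁conv : coeZR (z₀ + u) ∈ convexHull ℝ (coeZR '' S) := by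
    have hcast2 : coeZR (z₀ + u)
        = (coeZR z₀ + -r₂') + ∑ t, (((mm t : ℤ) : ℝ) - cc t) • coeZR (g t) := by
      have hsplit : coeZR (z₀ + u) = coeZR z₀ + coeZR u := by
        funext j
        simp only [coeZR, Pi.add_apply]
        push_cast
        rfl
      rw [hsplit, hucast, hccsum]
      have hterm : ∀ t : ι, ((mm t : ℤ) : ℝ) • coeZR (g t)
          = cc t • coeZR (g t) + (((mm t : ℤ) : ℝ) - cc t) • coeZR (g t) := by
        intro t
        rw [← add_smul]
        congr 1
        ring
      rw [Finset.sum_congr rfl fun t _ => hterm t, Finset.sum_add_distrib]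
      abel
    rw [hcast2]
    exact conv_add_combo CR dR S hS g hgK _ (fun t => by linarith [hmge t]) hy₀
  have hz₁S : z₀ + u ∈ S := by rw [← hSint]; exact hz₁conv
  -- divisibility of the pairing
  have hdvdu : d ∣ ∑ i, a i * u i := by
    have hswap : ∑ i, a i * u i = ∑ t, mm t * (∑ i, a i * g t i) := by
      have h1 : ∀ i, a i * u i = ∑ t, a i * (mm t * g t i) := by
        intro i
        calc a i * u i = a i * ∑ t, mm t * g t i := rfl
          _ = ∑ t, a i * (mm t * g t i) := Finset.mul_sum _ _ _
      rw [Finset.sum_congr rfl fun i (_ : i ∈ Finset.univ) => h1 i, Finset.sum_comm]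
      refine Finset.sum_congr rfl fun t _ => ?_
      rw [Finset.mul_sum]
      exact Finset.sum_congr rfl fun i _ => by ring
    rw [hswap]
    exact Finset.dvd_sum fun t _ => Dvd.dvd.mul_right (hmdvd t) _
  obtain ⟨kq, hkq⟩ := hdvdu
  refine ⟨(z₀ + u) - kq • w, ?_, ?_⟩
  · rw [hS]
    intro i
    rw [hS] at hz₁S
    have hz₁row := hz₁S i
    have heq3 : ∑ j, (CR i j : ℝ) * ((((z₀ + u) - kq • w) j : ℤ) : ℝ)
        = ∑ j, (CR i j : ℝ) * (((z₀ + u) j : ℤ) : ℝ)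
          - (kq : ℝ) * ∑ j, (CR i j : ℝ) * ((w j : ℤ) : ℝ) := by
      simp_rw [Pi.sub_apply, Pi.smul_apply, smul_eq_mul, Finset.mul_sum]
      rw [← Finset.sum_sub_distrib]
      refine Finset.sum_congr rfl fun j _ => ?_
      push_cast
      ring
    show ∑ j, (CR i j : ℝ) * ((((z₀ + u) - kq • w) j : ℤ) : ℝ) ≤ (dR i : ℝ)
    rw [heq3, hwker i, mul_zero, sub_zero]
    exact hz₁row
  · have heq4 : ∑ i, a i * ((z₀ + u) - kq • w) i
        = (∑ i, a i * z₀ i) + (∑ i, a i * u i) - kq * ∑ i, a i * w i := by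
      simp_rw [Pi.sub_apply, Pi.add_apply, Pi.smul_apply, smul_eq_mul, mul_sub, mul_add,
        Finset.sum_sub_distrib, Finset.sum_add_distrib]
      congr 1
      rw [Finset.mul_sum]
      exact Finset.sum_congr rfl fun i _ => by ring
    rw [heq4, ← hd, hkq]
    ring

lemma cutLe_subset_of_dots {n : ℕ} {S S' : Set (Fin n → ℤ)} (a : Fin n → ℤ) (β : ℝ)
    (h : ∀ z ∈ S, ∃ z' ∈ S', (∑ i, a i * z' i) = ∑ i, a i * z i) :
    cutLe S a β ⊆ cutLe S' a β := by
  classical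
  intro x hx
  unfold cutLe at hx ⊢
  by_cases hc : ∃ z ∈ S, dotIR a (coeZR z) ≤ β
  · obtain ⟨z, hzS, hzb⟩ := hc
    obtain ⟨z', hz'S', hz'dot⟩ := h z hzS
    have hdot' : dotIR a (coeZR z') = dotIR a (coeZR z) := by
      simp only [dotIR, coeZR]
      have h2 := congrArg (fun t : ℤ => (t : ℝ)) hz'dot
      push_cast at h2
      exact h2
    rw [if_pos ⟨z, hzS, hzb⟩] at hx
    rw [if_pos ⟨z', hz'S', by rw [hdot']; exact hzb⟩]
    show dotIR a x ≤ floorS S' a β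
    refine le_trans hx (csSup_le_csSup ?_ ?_ ?_)
    · exact ⟨β, by rintro t ⟨z'', _, rfl, hle⟩; exact hle⟩
    · exact ⟨dotIR a (coeZR z), z, hzS, rfl, hzb⟩
    · rintro t ⟨z1, hz1, hteq, htle⟩
      obtain ⟨z2, hz2, hdots⟩ := h z1 hz1
      have hdot2 : dotIR a (coeZR z2) = dotIR a (coeZR z1) := by
        simp only [dotIR, coeZR]
        have h2 := congrArg (fun t : ℤ => (t : ℝ)) hdots
        push_cast at h2
        exact h2
      exact ⟨z2, hz2, by rw [hdot2]; exact hteq, htle⟩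
  · rw [if_neg hc] at hx
    exact absurd hx (Set.notMem_empty x)


end SCGaux

/-- Let `S = R ∩ ℤ^n` be nonempty for a rational polyhedron `R`, so
`conv(S) ∩ ℤ^n = S` and `conv(S) = 𝒫 + ℛ + ℒ` with `ℒ` the lineality space of `conv(S)`,
`𝒫 + ℛ = conv(S) ∩ ℒ^⊥` a pointed polyhedron with recession cone `ℛ`, and `𝒫` a polytope.
Let `S₀ = (𝒫 + lin(ℛ) + ℒ) ∩ ℤ^n` with `lin(ℛ) = ℛ + (−ℛ)`. If `P ⊆ conv(S)` is a
nonempty rational polyhedron, then `P_S = P_{S₀} ∩ P_{S,Π}` where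
`Π = {(α,β) ∈ Π_P : αℓ = 0 for all ℓ ∈ ℒ}`. -/
theorem scg_closure_decomposition_lineality {n mR m : ℕ}
    (CR : Matrix (Fin mR) (Fin n) ℚ) (dR : Fin mR → ℚ) (R : Set (Fin n → ℝ))
    (hR : R = {x | ∀ i, ∑ j, (CR i j : ℝ) * x j ≤ (dR i : ℝ)})
    (S : Set (Fin n → ℤ)) (hSdef : S = {z | coeZR z ∈ R}) (hSne : S.Nonempty)
    (hSint : {z : Fin n → ℤ | coeZR z ∈ convexHull ℝ (coeZR '' S)} = S)
    (Pc Rc L : Set (Fin n → ℝ))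
    (hL : L = linealitySp (convexHull ℝ (coeZR '' S)))
    (hdec : convexHull ℝ (coeZR '' S) = Pc + Rc + L)
    (hPR : Pc + Rc
        = convexHull ℝ (coeZR '' S) ∩ {x | ∀ l ∈ L, ∑ i, x i * l i = 0})
    (hRrec : Rc = recCone (Pc + Rc))
    (hPRpointed : linealitySp (Pc + Rc) = {0})
    (hPcconv : Convex ℝ Pc) (hPcbdd : Bornology.IsBounded Pc)
    (S₀ : Set (Fin n → ℤ)) (hS₀ : S₀ = {z | coeZR z ∈ Pc + (Rc + -Rc) + L})
    (A : Matrix (Fin m) (Fin n) ℤ) (b : Fin m → ℤ) (P : Set (Fin n → ℝ))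
    (hP : P = {x | ∀ i, ∑ j, (A i j : ℝ) * x j ≤ (b i : ℝ)})
    (hPne : P.Nonempty) (hPsub : P ⊆ convexHull ℝ (coeZR '' S)) :
    closLe S (PiLe A b P)
      = closLe S₀ (PiLe A b P)
        ∩ closLe S {p ∈ PiLe A b P | ∀ l ∈ L, dotIR p.1 l = 0} := by
  classical
  have hSrows : S = {z : Fin n → ℤ | ∀ i, ∑ j, (CR i j : ℝ) * (z j : ℝ) ≤ (dR i : ℝ)} := by
    rw [hSdef, hR]
    rfl
  have hzconv : ∀ z ∈ S, coeZR z ∈ convexHull ℝ (coeZR '' S) :=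
    fun z hz => subset_convexHull ℝ _ (Set.mem_image_of_mem _ hz)
  have hRc0 : (0 : Fin n → ℝ) ∈ Rc := by
    rw [hRrec]
    intro x hx t ht
    simpa using hx
  have hSS₀ : S ⊆ S₀ := by
    intro z hz
    rw [hS₀]
    have h1 : coeZR z ∈ Pc + Rc + L := by rw [← hdec]; exact hzconv z hz
    rw [Set.mem_add] at h1
    obtain ⟨pr, hpr, lv, hlv, heq⟩ := h1
    rw [Set.mem_add] at hpr
    obtain ⟨p, hp, r, hr, heq2⟩ := hpr
    have h0neg : (0 : Fin n → ℝ) ∈ -Rc := by rw [Set.mem_neg, neg_zero]; exact hRc0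
    show coeZR z ∈ Pc + (Rc + -Rc) + L
    refine Set.mem_add.2 ⟨p + (r + 0), Set.mem_add.2 ⟨p, hp, r + 0,
      Set.add_mem_add hr h0neg, rfl⟩, lv, hlv, ?_⟩
    rw [← heq, ← heq2]
    abel
  apply Set.Subset.antisymm
  · intro x hx
    simp only [closLe, Set.mem_iInter] at hx
    constructor
    · simp only [closLe, Set.mem_iInter]
      intro p hp
      exact SCGaux.cutLe_subset_of_dots p.1 p.2 (fun z hz => ⟨z, hSS₀ hz, rfl⟩) (hx p hp)
    · simp only [closLe, Set.mem_iInter]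
      intro p hp
      exact hx p hp.1
  · rintro x ⟨hx₀, hxPi⟩
    simp only [closLe, Set.mem_iInter] at hx₀ hxPi ⊢
    intro p hp
    by_cases hL0 : ∀ l ∈ L, dotIR p.1 l = 0
    · exact hxPi p ⟨hp, hL0⟩
    · push_neg at hL0
      obtain ⟨l, hlL, hlne⟩ := hL0
      refine SCGaux.cutLe_subset_of_dots p.1 p.2 (fun z₀ hz₀ => ?_) (hx₀ p hp)
      exact SCGaux.crux CR dR S hSrows hSne hSint Pc Rc L hdec hRrec p.1 l (hL ▸ hlL) hlne
        z₀ (by rw [hS₀] at hz₀; exact hz₀)
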